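/- Let f be an odd prime, Q a primitive form of discriminant Df², and q a primitive form of discriminant D together with an integer matrix R of determinant f satisfying q·R = Q. Then Q is properly equivalent to q·R_g for some g with 0 ≤ g ≤ f and f ∤ q(g,1) (where the condition is vacuous for g = f). -/

import Mathlib

/-- An integral binary quadratic form ax² + bxy + cy². -/
structure BQF where
  a : ℤ
  b : ℤ
  c : ℤ

namespace BQF

/-- Value of the form at (x, y). -/
def eval (q : BQF) (x y : ℤ) : ℤ := q.a * x ^ 2 + q.b * x * y + q.c * y ^ 2

/-- Discriminant b² - 4ac. -/
def disc (q : BQF) : ℤ := q.b ^ 2 - 4 * q.a * q.c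

/-- A form is primitive if gcd(a, b, c) = 1. -/
def IsPrimitive (q : BQF) : Prop := Int.gcd (Int.gcd q.a q.b) q.c = 1

/-- Right action: (q·M)(x,y) = q(px + ry, sx + ty) for M = [[p,r],[s,t]]. -/
def act (q : BQF) (M : Matrix (Fin 2) (Fin 2) ℤ) : BQF :=
  ⟨q.eval (M 0 0) (M 1 0),
   q.eval (M 0 0 + M 0 1) (M 1 0 + M 1 1) - q.eval (M 0 0) (M 1 0) - q.eval (M 0 1) (M 1 1),
   q.eval (M 0 1) (M 1 1)⟩

/-- Proper equivalence: equivalence under the SL₂(ℤ) action. -/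
def ProperEquiv (q q' : BQF) : Prop :=
  ∃ U : Matrix.SpecialLinearGroup (Fin 2) ℤ, q.act U.1 = q'

end BQF

/-- R_g = [[f,g],[0,1]] for g < f, and R_f = [[1,0],[0,f]] when g = f. -/
def Rmat (f g : ℤ) : Matrix (Fin 2) (Fin 2) ℤ :=
  if g = f then !![1, 0; 0, f] else !![f, g; 0, 1]

/-!
Right multiplication by `SL(2, ℤ)` performs integer column operations, so `R` can be brought to
Hermite normal form: `R * V = [[a, b], [0, d]]` with `d = gcd` of the bottom row. Since
`a * d = det R = f` is prime, `d = 1` or `d = f`, and a further shear turns this into `R_g` with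
`0 ≤ g ≤ f`. Then `q·R_g = Q·V` is properly equivalent to `Q`. For `g < f` the form `q·R_g` is
`(f² a, f (2ag + b), q(g, 1))`, so `f ∣ q(g, 1)` would make `f` divide its content, which is an
invariant of proper equivalence and equals the content `1` of `Q`.
-/

open Matrix MatrixGroups ModularGroup

theorem Matrix.exists_SL_mul_upperTriangular_gcd (R : Matrix (Fin 2) (Fin 2) ℤ) :
    ∃ V : SL(2, ℤ), (R * (V : Matrix (Fin 2) (Fin 2) ℤ)) 1 0 = 0 ∧
      (R * (V : Matrix (Fin 2) (Fin 2) ℤ)) 1 1 = Int.gcd (R 1 0) (R 1 1) := by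
  set d : ℤ := ((Int.gcd (R 1 0) (R 1 1) : ℕ) : ℤ) with hd
  rcases eq_or_ne d 0 with hd0 | hd0
  · obtain ⟨hs, ht⟩ : R 1 0 = 0 ∧ R 1 1 = 0 := by simpa [hd, Int.gcd_eq_zero_iff] using hd0
    exact ⟨1, by simpa using hs, by simpa [hd0] using ht⟩
  obtain ⟨s', hs'⟩ : d ∣ R 1 0 := Int.gcd_dvd_left _ _
  obtain ⟨t', ht'⟩ : d ∣ R 1 1 := Int.gcd_dvd_right _ _
  set u := Int.gcdA (R 1 0) (R 1 1)
  set v := Int.gcdB (R 1 0) (R 1 1)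
  have hbezout : R 1 0 * u + R 1 1 * v = d := (Int.gcd_eq_gcd_ab _ _).symm
  have hcoprime : t' * v + u * s' = 1 := by
    refine mul_left_cancel₀ hd0 ?_
    linear_combination hbezout - u * hs' - v * ht'
  refine ⟨⟨!![t', u; -s', v], by simpa [det_fin_two_of] using hcoprime⟩, ?_, ?_⟩
  · simp only [mul_apply, Fin.sum_univ_two, hs', ht', of_apply, cons_val', cons_val_zero,
      cons_val_one, cons_val_fin_one]
    ring
  · simpa [mul_apply, Fin.sum_univ_two] using hbezout

theorem Matrix.upperTriangular_mul_T_zpow (a b d k : ℤ) :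
    !![a, b; 0, d] * ((T ^ k : SL(2, ℤ)) : Matrix (Fin 2) (Fin 2) ℤ) =
      !![a, a * k + b; 0, d] := by
  rw [coe_T_zpow, mul_fin_two]
  simp [add_comm]

theorem exists_mul_SL_eq_Rmat {f : ℕ} (hf : f.Prime) {R : Matrix (Fin 2) (Fin 2) ℤ}
    (hR : R.det = f) :
    ∃ g : ℤ, 0 ≤ g ∧ g ≤ f ∧
      ∃ V : SL(2, ℤ), R * (V : Matrix (Fin 2) (Fin 2) ℤ) = Rmat f g := by
  obtain ⟨V, h10, h11⟩ := R.exists_SL_mul_upperTriangular_gcd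
  set a := (R * (V : Matrix (Fin 2) (Fin 2) ℤ)) 0 0
  set b := (R * (V : Matrix (Fin 2) (Fin 2) ℤ)) 0 1
  have hRV :
      R * (V : Matrix (Fin 2) (Fin 2) ℤ) = !![a, b; 0, (Int.gcd (R 1 0) (R 1 1) : ℤ)] := by
    rw [← h10, ← h11]
    exact eta_fin_two _
  have hdet : a * Int.gcd (R 1 0) (R 1 1) = f := by
    have h := congrArg det hRV
    rw [det_mul, hR, Matrix.SpecialLinearGroup.det_coe, det_fin_two_of] at h
    linarith
  have hf0 : (f : ℤ) ≠ 0 := by exact_mod_cast hf.ne_zero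
  rcases hf.eq_one_or_self_of_dvd _ (Int.natCast_dvd_natCast.mp (Dvd.intro_left _ hdet))
    with hd | hd <;> rw [hd] at hRV hdet <;> push_cast at hRV hdet
  · refine ⟨b % f, Int.emod_nonneg _ hf0, (Int.emod_lt_of_pos _ (by omega)).le,
      V * T ^ (-(b / f)), ?_⟩
    simp only [Matrix.SpecialLinearGroup.coe_mul]
    rw [← Matrix.mul_assoc, hRV, upperTriangular_mul_T_zpow, Rmat,
      if_neg (Int.emod_lt_of_pos _ (by omega)).ne, Int.emod_def, show a = f by linarith]
    congrm !![_, ?_; _, _]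
    ring
  · refine ⟨f, by positivity, le_rfl, V * T ^ (-b), ?_⟩
    simp only [Matrix.SpecialLinearGroup.coe_mul]
    rw [← Matrix.mul_assoc, hRV, upperTriangular_mul_T_zpow, Rmat, if_pos rfl,
      show a = 1 from (mul_eq_right₀ hf0).mp hdet]
    simp

namespace BQF

def content (q : BQF) : ℕ := Int.gcd (Int.gcd q.a q.b) q.c

theorem dvd_content_iff {c : ℕ} {q : BQF} :
    c ∣ q.content ↔ (c : ℤ) ∣ q.a ∧ (c : ℤ) ∣ q.b ∧ (c : ℤ) ∣ q.c := by
  rw [content, Int.dvd_gcd_iff, Int.natCast_dvd_natCast, Int.dvd_gcd_iff, and_assoc]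

theorem content_dvd_eval (q : BQF) (x y : ℤ) : (q.content : ℤ) ∣ q.eval x y := by
  obtain ⟨ha, hb, hc⟩ := dvd_content_iff.mp (dvd_refl q.content)
  unfold eval
  exact ((ha.mul_right _).add ((hb.mul_right _).mul_right _)).add (hc.mul_right _)

theorem content_dvd_content_act (q : BQF) (M : Matrix (Fin 2) (Fin 2) ℤ) :
    q.content ∣ (q.act M).content :=
  dvd_content_iff.mpr ⟨q.content_dvd_eval _ _,
    ((q.content_dvd_eval _ _).sub (q.content_dvd_eval _ _)).sub (q.content_dvd_eval _ _),
    q.content_dvd_eval _ _⟩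

theorem act_mul (q : BQF) (M N : Matrix (Fin 2) (Fin 2) ℤ) :
    q.act (M * N) = (q.act M).act N := by
  simp only [act, eval, mul_apply, Fin.sum_univ_two, BQF.mk.injEq]
  refine ⟨by ring, by ring, by ring⟩

theorem act_one (q : BQF) : q.act 1 = q := by
  cases q
  simp only [act, eval, one_fin_two, of_apply, cons_val', cons_val_zero, cons_val_one,
    empty_val', cons_val_fin_one, BQF.mk.injEq]
  exact ⟨by ring, by ring, by ring⟩

theorem ProperEquiv.content_eq {q q' : BQF} (h : ProperEquiv q q') : q'.content = q.content := by
  obtain ⟨U, rfl⟩ := h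
  refine Nat.dvd_antisymm ?_ (q.content_dvd_content_act _)
  convert (q.act U.1).content_dvd_content_act (U⁻¹ : SL(2, ℤ))
  rw [← act_mul, ← Matrix.SpecialLinearGroup.coe_mul, mul_inv_cancel,
    Matrix.SpecialLinearGroup.coe_one, act_one]

theorem act_Rmat_of_ne (q : BQF) {f g : ℤ} (hg : g ≠ f) :
    q.act (Rmat f g) = ⟨q.a * f ^ 2, f * (2 * q.a * g + q.b), q.eval g 1⟩ := by
  simp only [Rmat, if_neg hg, act, eval, of_apply, cons_val', cons_val_zero, cons_val_one,
    empty_val', cons_val_fin_one, BQF.mk.injEq]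
  exact ⟨by ring, by ring, trivial⟩

end BQF

theorem stmt19_general (f : ℕ) (hf : f.Prime)
    (Q : BQF) (hQ : Q.IsPrimitive)
    (q : BQF)
    (R : Matrix (Fin 2) (Fin 2) ℤ) (hR : R.det = f) (hQR : q.act R = Q) :
    ∃ g : ℤ, 0 ≤ g ∧ g ≤ f ∧ (g = f ∨ ¬ (f : ℤ) ∣ q.eval g 1) ∧
      BQF.ProperEquiv Q (q.act (Rmat f g)) := by
  obtain ⟨g, hg0, hgf, V, hRV⟩ := exists_mul_SL_eq_Rmat hf hR
  have hequiv : BQF.ProperEquiv Q (q.act (Rmat f g)) :=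
    ⟨V, by rw [← hQR, ← BQF.act_mul, hRV]⟩
  refine ⟨g, hg0, hgf, or_iff_not_imp_left.mpr fun hne hdvd ↦ ?_, hequiv⟩
  have hprim : (q.act (Rmat f g)).content = 1 := hequiv.content_eq.trans hQ
  have hf_dvd : f ∣ (q.act (Rmat f g)).content := by
    rw [BQF.dvd_content_iff, q.act_Rmat_of_ne hne]
    exact ⟨dvd_mul_of_dvd_right (dvd_pow_self _ two_ne_zero) _, dvd_mul_right _ _, hdvd⟩
  exact hf.not_dvd_one (hprim ▸ hf_dvd)

theorem stmt19 (f : ℕ) (hf : f.Prime) (hodd : Odd f) (D : ℤ)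
    (Q : BQF) (hQ : Q.IsPrimitive) (hQd : Q.disc = D * f ^ 2)
    (q : BQF) (hq : q.IsPrimitive) (hqd : q.disc = D)
    (R : Matrix (Fin 2) (Fin 2) ℤ) (hR : R.det = f) (hQR : q.act R = Q) :
    ∃ g : ℤ, 0 ≤ g ∧ g ≤ f ∧ (g = f ∨ ¬ (f : ℤ) ∣ q.eval g 1) ∧
      BQF.ProperEquiv Q (q.act (Rmat f g)) :=
  stmt19_general f hf Q hQ q R hR hQR
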